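/- For all integers m ≥ 0 and k ≥ 2, the spider Sp(2, 2+2m, 2+2m+k) with legs of lengths 2, 2+2m, 2+2m+k has local antimagic chromatic number 4. -/

import Mathlib

open SimpleGraph

/-- The induced vertex sum of an edge labeling. -/
noncomputable def vertexSum {V : Type*} (G : SimpleGraph V) (f : Sym2 V → ℕ) (x : V) : ℕ :=
  ∑ᶠ y ∈ G.neighborSet x, f s(x, y)

/-- `f` is a local antimagic labeling of `G`. -/
def IsLocalAntimagic {V : Type*} (G : SimpleGraph V) (f : Sym2 V → ℕ) : Prop :=
  Set.BijOn f G.edgeSet (Set.Icc 1 G.edgeSet.ncard) ∧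
  ∀ ⦃x y : V⦄, G.Adj x y → vertexSum G f x ≠ vertexSum G f y

/-- The number of distinct induced vertex labels of `f`. -/
noncomputable def colorCount {V : Type*} (G : SimpleGraph V) (f : Sym2 V → ℕ) : ℕ :=
  (Set.range (vertexSum G f)).ncard

/-- The local antimagic chromatic number. -/
noncomputable def chiLA {V : Type*} (G : SimpleGraph V) : ℕ :=
  sInf {n | ∃ f : Sym2 V → ℕ, IsLocalAntimagic G f ∧ colorCount G f = n}

/-- A pendant vertex: a vertex of degree 1. -/
def IsPendant {V : Type*} (G : SimpleGraph V) (x : V) : Prop :=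
  (G.neighborSet x).ncard = 1

/-- A pendant edge: an edge incident to a pendant vertex. -/
def IsPendantEdge {V : Type*} (G : SimpleGraph V) (e : Sym2 V) : Prop :=
  e ∈ G.edgeSet ∧ ∃ x ∈ e, IsPendant G x

/-- The spider graph with `d` legs of lengths `y i`: the core is `none`, and leg `i`
consists of vertices `some ⟨i, j⟩` for `j : Fin (y i)`, forming a path from the core. -/
def spider (d : ℕ) (y : Fin d → ℕ) : SimpleGraph (Option (Σ i : Fin d, Fin (y i))) :=
  SimpleGraph.fromRel (fun u v =>
    ∃ (i : Fin d) (j : Fin (y i)), (u = none ∧ v = some ⟨i, j⟩ ∧ (j : ℕ) = 0) ∨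
      (∃ k : Fin (y i), u = some ⟨i, j⟩ ∧ v = some ⟨i, k⟩ ∧ (j : ℕ) + 1 = (k : ℕ)))

/-!
Lower bound: in a local antimagic labeling of a spider with `d ≥ 1` legs, all of length at least
two, the `d` leaves show the labels of their pendant edges, which are distinct and at most the
number `q` of edges, while the edge labelled `q` has an endpoint of degree two, whose vertex sum
exceeds `q`. Hence at least `d + 1 = 4` sums occur.

Upper bound: an explicit labeling of `Sp(2, 2 + 2m, 2 + 2m + k)` all of whose vertex sums lie in
the four-element interval `[q - 2, q + 1]`.
-/

namespace Spider

variable {d : ℕ} {y : Fin d → ℕ}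

abbrev LegVertex (y : Fin d → ℕ) : Type := Σ i : Fin d, Fin (y i)

lemma sigma_eq_iff {s t : LegVertex y} :
    s = t ↔ s.1 = t.1 ∧ (s.2 : ℕ) = t.2 := by
  rw [Sigma.ext_iff]
  exact and_congr_right fun h => Fin.heq_ext_iff (congrArg y h)

def parent (s : LegVertex y) : Option (LegVertex y) :=
  if (s.2 : ℕ) = 0 then none else some ⟨s.1, ⟨s.2 - 1, by omega⟩⟩

def child (s : LegVertex y) (hs : (s.2 : ℕ) + 1 < y s.1) : LegVertex y :=
  ⟨s.1, ⟨s.2 + 1, hs⟩⟩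

def parentEdge (s : LegVertex y) : Sym2 (Option (LegVertex y)) :=
  s(parent s, some s)

lemma parent_eq_none_iff {s : LegVertex y} : parent s = none ↔ (s.2 : ℕ) = 0 := by
  unfold parent; split_ifs <;> simpa

lemma parent_mk_zero (i : Fin d) (h : 0 < y i) : parent ⟨i, ⟨0, h⟩⟩ = none :=
  parent_eq_none_iff.2 rfl

lemma parent_eq_some_iff {s t : LegVertex y} :
    parent s = some t ↔ ∃ ht, child t ht = s := by
  have hlt := s.2.isLt
  unfold parent child
  split_ifs with hs
  · simp only [false_iff, not_exists, sigma_eq_iff]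
    omega
  · simp only [Option.some.injEq, sigma_eq_iff]
    constructor
    · rintro ⟨h1, h2⟩
      have := congrArg y h1
      exact ⟨by omega, h1.symm, by omega⟩
    · rintro ⟨_, h1, h2⟩
      exact ⟨h1.symm, by omega⟩

lemma parent_child (s : LegVertex y) (hs : (s.2 : ℕ) + 1 < y s.1) :
    parent (child s hs) = some s :=
  parent_eq_some_iff.2 ⟨hs, rfl⟩

lemma parent_ne_some (s : LegVertex y) : parent s ≠ some s := by
  rw [Ne, parent_eq_some_iff]
  rintro ⟨_, h⟩
  simp [sigma_eq_iff, child] at h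

lemma spider_adj_iff {u v : Option (LegVertex y)} :
    (spider d y).Adj u v ↔ ∃ s, s(u, v) = parentEdge s := by
  have hrel : ∀ u v : Option (LegVertex y),
      (∃ (i : Fin d) (j : Fin (y i)), (u = none ∧ v = some ⟨i, j⟩ ∧ (j : ℕ) = 0) ∨
        (∃ k : Fin (y i), u = some ⟨i, j⟩ ∧ v = some ⟨i, k⟩ ∧
          (j : ℕ) + 1 = (k : ℕ))) ↔
      ∃ s, u = parent s ∧ v = some s := by
    intro u v
    constructor
    · rintro ⟨i, j, ⟨rfl, rfl, hj⟩ | ⟨k, rfl, rfl, hk⟩⟩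
      · exact ⟨⟨i, j⟩, (parent_eq_none_iff.2 hj).symm, rfl⟩
      · refine ⟨⟨i, k⟩, (parent_eq_some_iff.2 ⟨hk ▸ k.isLt, ?_⟩).symm, rfl⟩
        simp [child, hk]
    · rintro ⟨s, rfl, rfl⟩
      cases hs : parent s with
      | none => exact ⟨s.1, s.2, Or.inl ⟨rfl, rfl, parent_eq_none_iff.1 hs⟩⟩
      | some t =>
        obtain ⟨ht, rfl⟩ := parent_eq_some_iff.1 hs
        exact ⟨t.1, t.2, Or.inr ⟨⟨t.2 + 1, ht⟩, rfl, rfl, rfl⟩⟩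
  simp only [spider, fromRel_adj, hrel, parentEdge, Sym2.eq_iff]
  constructor
  · rintro ⟨-, ⟨s, h⟩ | ⟨s, h⟩⟩
    exacts [⟨s, Or.inl h⟩, ⟨s, Or.inr h.symm⟩]
  · rintro ⟨s, ⟨rfl, rfl⟩ | ⟨rfl, rfl⟩⟩
    exacts [⟨parent_ne_some s, Or.inl ⟨s, rfl, rfl⟩⟩,
      ⟨(parent_ne_some s).symm, Or.inr ⟨s, rfl, rfl⟩⟩]

lemma edgeSet_spider : (spider d y).edgeSet = Set.range (parentEdge (y := y)) := by
  ext e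
  induction e using Sym2.ind with
  | _ u v => simp only [mem_edgeSet, spider_adj_iff, Set.mem_range, eq_comm]

lemma parentEdge_injective : Function.Injective (parentEdge (y := y)) := by
  intro s t h
  rcases Sym2.eq_iff.1 h with ⟨-, h⟩ | ⟨hs, ht⟩
  · exact Option.some_injective _ h
  · obtain ⟨_, rfl⟩ := parent_eq_some_iff.1 hs
    obtain ⟨_, h⟩ := parent_eq_some_iff.1 ht.symm
    simp [child, sigma_eq_iff] at h
    omega

lemma ncard_edgeSet_spider : (spider d y).edgeSet.ncard = ∑ i, y i := by
  rw [edgeSet_spider, Set.ncard_range_of_injective parentEdge_injective, Nat.card_sigma]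
  simp

lemma mem_neighborSet_spider_some {s : LegVertex y} {v : Option (LegVertex y)} :
    v ∈ (spider d y).neighborSet (some s) ↔ v = parent s ∨ ∃ hs, v = some (child s hs) := by
  simp only [mem_neighborSet, spider_adj_iff, parentEdge, Sym2.eq_iff, Option.some.injEq]
  constructor
  · rintro ⟨t, ⟨ht, rfl⟩ | ⟨rfl, rfl⟩⟩
    · obtain ⟨hs, rfl⟩ := parent_eq_some_iff.1 ht.symm
      exact Or.inr ⟨hs, rfl⟩
    · exact Or.inl rfl
  · rintro (rfl | ⟨hs, rfl⟩)
    exacts [⟨s, Or.inr ⟨rfl, rfl⟩⟩,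
      ⟨child s hs, Or.inl ⟨(parent_child s hs).symm, rfl⟩⟩]

lemma neighborSet_spider_none (hy : ∀ i, 0 < y i) :
    (spider d y).neighborSet none = Set.range fun i => some ⟨i, ⟨0, hy i⟩⟩ := by
  ext v
  simp only [mem_neighborSet, spider_adj_iff, parentEdge, Sym2.eq_iff, reduceCtorEq, false_and,
    or_false, Set.mem_range]
  constructor
  · rintro ⟨t, ht, rfl⟩
    exact ⟨t.1, by simp [sigma_eq_iff, parent_eq_none_iff.1 ht.symm]⟩
  · rintro ⟨i, rfl⟩
    exact ⟨_, (parent_mk_zero _ _).symm, rfl⟩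

lemma vertexSum_spider_none (f : Sym2 (Option (LegVertex y)) → ℕ) (hy : ∀ i, 0 < y i) :
    vertexSum (spider d y) f none = ∑ i, f (parentEdge ⟨i, ⟨0, hy i⟩⟩) := by
  have hinj : Function.Injective fun i => (some ⟨i, ⟨0, hy i⟩⟩ : Option (LegVertex y)) := by
    intro i j h
    exact (Sigma.mk.inj_iff.1 (Option.some.inj h)).1
  rw [vertexSum, neighborSet_spider_none hy, finsum_mem_range hinj, finsum_eq_sum_of_fintype]
  simp only [parentEdge, parent_mk_zero]

lemma vertexSum_spider_some_of_lt (f : Sym2 (Option (LegVertex y)) → ℕ)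
    {s : LegVertex y} (hs : (s.2 : ℕ) + 1 < y s.1) :
    vertexSum (spider d y) f (some s) = f (parentEdge s) + f (parentEdge (child s hs)) := by
  have hN : (spider d y).neighborSet (some s) = {parent s, some (child s hs)} := by
    ext v
    rw [mem_neighborSet_spider_some]
    simp [hs]
  have hne : parent s ≠ some (child s hs) := by
    rw [Ne, parent_eq_some_iff]
    rintro ⟨_, h⟩
    simp [child, sigma_eq_iff] at h
    omega
  rw [vertexSum, hN, finsum_mem_pair hne, parentEdge, parentEdge, parent_child, Sym2.eq_swap]

lemma vertexSum_spider_some_of_not_lt (f : Sym2 (Option (LegVertex y)) → ℕ)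
    {s : LegVertex y} (hs : ¬(s.2 : ℕ) + 1 < y s.1) :
    vertexSum (spider d y) f (some s) = f (parentEdge s) := by
  have hN : (spider d y).neighborSet (some s) = {parent s} := by
    ext v
    rw [mem_neighborSet_spider_some]
    simp [hs]
  rw [vertexSum, hN, finsum_mem_singleton, parentEdge, Sym2.eq_swap]

lemma parentEdge_mem_edgeSet (s : LegVertex y) :
    parentEdge s ∈ (spider d y).edgeSet :=
  edgeSet_spider ▸ ⟨s, rfl⟩

lemma exists_lt_vertexSum (hy : ∀ i, 2 ≤ y i) {f : Sym2 (Option (LegVertex y)) → ℕ}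
    (hf : ∀ e ∈ (spider d y).edgeSet, 0 < f e) {e : Sym2 (Option (LegVertex y))}
    (he : e ∈ (spider d y).edgeSet) : ∃ v, f e < vertexSum (spider d y) f v := by
  rw [edgeSet_spider] at he
  obtain ⟨s, rfl⟩ := he
  have hpos : ∀ t, 0 < f (parentEdge t) := fun t => hf _ (parentEdge_mem_edgeSet t)
  by_cases hs : (s.2 : ℕ) + 1 < y s.1
  · refine ⟨some s, ?_⟩
    rw [vertexSum_spider_some_of_lt f hs]
    have := hpos (child s hs)
    omega
  · obtain ⟨t, ht⟩ : ∃ t, parent s = some t := by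
      rw [← Option.ne_none_iff_exists', Ne, parent_eq_none_iff]
      have := hy s.1
      omega
    obtain ⟨hlt, rfl⟩ := parent_eq_some_iff.1 ht
    refine ⟨some t, ?_⟩
    rw [vertexSum_spider_some_of_lt f hlt]
    have := hpos t
    omega

theorem succ_le_colorCount (hd : 0 < d) (hy : ∀ i, 2 ≤ y i)
    {f : Sym2 (Option (LegVertex y)) → ℕ} (hf : IsLocalAntimagic (spider d y) f) :
    d + 1 ≤ colorCount (spider d y) f := by
  obtain ⟨⟨hmaps, hinj, hsurj⟩, -⟩ := hf
  let leaf : Fin d → LegVertex y := fun i => ⟨i, ⟨y i - 1, by have := hy i; omega⟩⟩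
  have hleaf : ∀ i, vertexSum (spider d y) f (some (leaf i)) = f (parentEdge (leaf i)) :=
    fun i => vertexSum_spider_some_of_not_lt f (by simp [leaf]; omega)
  have hleaf_inj : Function.Injective fun i => f (parentEdge (leaf i)) := fun i j h =>
    congrArg Sigma.fst <| parentEdge_injective <|
      hinj (parentEdge_mem_edgeSet _) (parentEdge_mem_edgeSet _) h
  have hq : 1 ≤ (spider d y).edgeSet.ncard := by
    rw [ncard_edgeSet_spider]
    have := Finset.single_le_sum (fun i _ => Nat.zero_le (y i)) (Finset.mem_univ ⟨0, hd⟩)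
    have := hy ⟨0, hd⟩
    omega
  obtain ⟨e, he, hfe⟩ := hsurj ⟨hq, le_rfl⟩
  obtain ⟨v, hv⟩ := exists_lt_vertexSum hy (fun e he => (hmaps he).1) he
  have hv_notMem : vertexSum (spider d y) f v ∉ Set.range fun i => f (parentEdge (leaf i)) := by
    rintro ⟨i, hi⟩
    have := (hmaps (parentEdge_mem_edgeSet (leaf i))).2
    simp only at hi
    omega
  calc d + 1 = (insert (vertexSum (spider d y) f v)
        (Set.range fun i => f (parentEdge (leaf i)))).ncard := by
        rw [Set.ncard_insert_of_notMem hv_notMem, Set.ncard_range_of_injective hleaf_inj,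
          Nat.card_fin]
    _ ≤ colorCount (spider d y) f :=
      Set.ncard_le_ncard (Set.insert_subset ⟨v, rfl⟩
        (Set.range_subset_iff.2 fun i => ⟨_, hleaf i⟩)) (Set.finite_range _)

noncomputable def labeling (lab : Fin d → ℕ → ℕ) : Sym2 (Option (LegVertex y)) → ℕ :=
  Function.extend parentEdge (fun s => lab s.1 s.2) 0

def legSum (y : Fin d → ℕ) (lab : Fin d → ℕ → ℕ) (i : Fin d) (j : ℕ) : ℕ :=
  lab i j + if j + 1 < y i then lab i (j + 1) else 0

variable {lab : Fin d → ℕ → ℕ}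

lemma labeling_parentEdge (s : LegVertex y) :
    labeling lab (parentEdge s) = lab s.1 s.2 :=
  parentEdge_injective.extend_apply _ _ _

lemma vertexSum_labeling_some (s : LegVertex y) :
    vertexSum (spider d y) (labeling lab) (some s) = legSum y lab s.1 s.2 := by
  unfold legSum
  split_ifs with hs
  · rw [vertexSum_spider_some_of_lt _ hs, labeling_parentEdge, labeling_parentEdge]
    rfl
  · rw [vertexSum_spider_some_of_not_lt _ hs, labeling_parentEdge, add_zero]

lemma vertexSum_labeling_none (hy : ∀ i, 0 < y i) :
    vertexSum (spider d y) (labeling lab) none = ∑ i, lab i 0 := by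
  simp only [vertexSum_spider_none _ hy, labeling_parentEdge]

lemma vertexSum_labeling_parent_ne (hy : ∀ i, 0 < y i)
    (hcore : ∀ i, legSum y lab i 0 ≠ ∑ i, lab i 0)
    (hleg : ∀ i j, j + 1 < y i → legSum y lab i j ≠ legSum y lab i (j + 1))
    (s : LegVertex y) :
    vertexSum (spider d y) (labeling lab) (parent s) ≠
      vertexSum (spider d y) (labeling lab) (some s) := by
  rw [vertexSum_labeling_some]
  cases hs : parent s with
  | none =>
    rw [vertexSum_labeling_none hy, parent_eq_none_iff.1 hs]
    exact (hcore s.1).symm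
  | some t =>
    obtain ⟨ht, rfl⟩ := parent_eq_some_iff.1 hs
    rw [vertexSum_labeling_some]
    exact hleg _ _ ht

theorem isLocalAntimagic_labeling (hy : ∀ i, 0 < y i)
    (hinj : ∀ i i' j j', j < y i → j' < y i' → lab i j = lab i' j' → i = i' ∧ j = j')
    (hmem : ∀ i j, j < y i → lab i j ∈ Set.Icc 1 (∑ i, y i))
    (hcore : ∀ i, legSum y lab i 0 ≠ ∑ i, lab i 0)
    (hleg : ∀ i j, j + 1 < y i → legSum y lab i j ≠ legSum y lab i (j + 1)) :
    IsLocalAntimagic (spider d y) (labeling lab) := by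
  have hlab_inj : Function.Injective fun s : LegVertex y => lab s.1 s.2 :=
    fun s t h => sigma_eq_iff.2 (hinj _ _ _ _ s.2.isLt t.2.isLt h)
  have hrange : Set.range (fun s : LegVertex y => lab s.1 s.2) =
      Set.Icc 1 (∑ i, y i) := by
    refine Set.eq_of_subset_of_ncard_le (Set.range_subset_iff.2 fun s => hmem _ _ s.2.isLt) ?_
    rw [Set.ncard_range_of_injective hlab_inj, Nat.card_sigma, Set.ncard_Icc_nat]
    simp
  have himage : labeling lab '' (spider d y).edgeSet = Set.Icc 1 (∑ i, y i) := by
    rw [edgeSet_spider, ← Set.range_comp, ← hrange]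
    exact congrArg Set.range (funext labeling_parentEdge)
  rw [IsLocalAntimagic, ncard_edgeSet_spider]
  refine ⟨⟨fun e he => himage ▸ Set.mem_image_of_mem _ he, ?_, himage.symm.subset⟩, ?_⟩
  · rw [edgeSet_spider]
    rintro _ ⟨s, rfl⟩ _ ⟨t, rfl⟩ h
    rw [labeling_parentEdge, labeling_parentEdge] at h
    rw [hlab_inj h]
  · intro x z hxz
    obtain ⟨s, hs⟩ := spider_adj_iff.1 hxz
    have key := vertexSum_labeling_parent_ne hy hcore hleg s
    rcases Sym2.eq_iff.1 hs with ⟨rfl, rfl⟩ | ⟨rfl, rfl⟩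
    exacts [key, key.symm]

end Spider

lemma chiLA_eq_of_forall_le_colorCount {V : Type*} {G : SimpleGraph V} {n : ℕ}
    (hlow : ∀ f, IsLocalAntimagic G f → n ≤ colorCount G f) {f : Sym2 V → ℕ}
    (hf : IsLocalAntimagic G f) (hfn : colorCount G f ≤ n) : chiLA G = n := by
  have hn : colorCount G f = n := le_antisymm hfn (hlow f hf)
  refine le_antisymm (Nat.sInf_le ⟨f, hf, hn⟩) (le_csInf ⟨n, f, hf, hn⟩ ?_)
  rintro _ ⟨g, hg, rfl⟩
  exact hlow g hg

abbrev legLengths (m k : ℕ) : Fin 3 → ℕ := ![2, 2 + 2 * m, 2 + 2 * m + k]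

/-- Along each leg the vertex sums alternate between `q + 1` and `q - 1`, where `q = 6 + 4m + k`,
except at the ends. The third leg uses a descending run `3 + 2m + k - j` and an ascending run
`2m + 3 + j`; for odd `k` the parity pattern flips after position `k / 2` so that the two runs do
not collide, which creates one vertex of sum `q` there. -/
def legLabel (m k : ℕ) : Fin 3 → ℕ → ℕ
  | 0, j => if j = 0 then 1 else 6 + 4 * m + k
  | 1, j => if j % 2 = 0 then 2 * m + 2 - j else 4 + 2 * m + k + j
  | 2, j => if (k % 2 = 0 ∨ j ≤ k / 2) ↔ j % 2 = 0 then 3 + 2 * m + k - j else 2 * m + 3 + j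

section legLabel

variable {m k : ℕ}

lemma two_le_legLengths (i : Fin 3) : 2 ≤ legLengths m k i := by
  fin_cases i <;> simp [legLengths, add_assoc]

lemma legLengths_pos (i : Fin 3) : 0 < legLengths m k i :=
  two_pos.trans_le (two_le_legLengths i)

lemma legLabel_mem_Icc {i : Fin 3} {j : ℕ} (hj : j < legLengths m k i) :
    legLabel m k i j ∈ Set.Icc 1 (∑ i, legLengths m k i) := by
  fin_cases i <;> simp [legLengths, legLabel, Fin.sum_univ_three] at hj ⊢ <;> split_ifs <;> omega

lemma legLabel_inj {i i' : Fin 3} {j j' : ℕ} (hj : j < legLengths m k i)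
    (hj' : j' < legLengths m k i') (h : legLabel m k i j = legLabel m k i' j') :
    i = i' ∧ j = j' := by
  fin_cases i <;> fin_cases i' <;> simp [legLengths, legLabel] at hj hj' h ⊢ <;>
    split_ifs at h <;> omega

lemma sum_legLabel_zero : ∑ i, legLabel m k i 0 = 6 + 4 * m + k := by
  simp [legLabel, Fin.sum_univ_three]
  omega

lemma legSum_legLabel_mem_Icc {i : Fin 3} {j : ℕ} (hj : j < legLengths m k i) :
    Spider.legSum (legLengths m k) (legLabel m k) i j ∈
      Set.Icc (4 + 4 * m + k) (7 + 4 * m + k) := by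
  fin_cases i <;> simp [legLengths, legLabel, Spider.legSum] at hj ⊢ <;> split_ifs <;> omega

lemma legSum_legLabel_zero_ne (hk : 2 ≤ k) (i : Fin 3) :
    Spider.legSum (legLengths m k) (legLabel m k) i 0 ≠ 6 + 4 * m + k := by
  fin_cases i <;> simp [legLengths, legLabel, Spider.legSum] <;> split_ifs <;> omega

lemma legSum_legLabel_succ_ne {i : Fin 3} {j : ℕ} (hj : j + 1 < legLengths m k i) :
    Spider.legSum (legLengths m k) (legLabel m k) i j ≠
      Spider.legSum (legLengths m k) (legLabel m k) i (j + 1) := by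
  fin_cases i <;> simp [legLengths, legLabel, Spider.legSum] at hj ⊢ <;> split_ifs <;> omega

end legLabel

theorem isLocalAntimagic_labeling_legLabel {m k : ℕ} (hk : 2 ≤ k) :
    IsLocalAntimagic (spider 3 (legLengths m k)) (Spider.labeling (legLabel m k)) := by
  refine Spider.isLocalAntimagic_labeling legLengths_pos (fun _ _ _ _ => legLabel_inj)
    (fun _ _ => legLabel_mem_Icc) (fun i => ?_) (fun _ _ => legSum_legLabel_succ_ne)
  rw [sum_legLabel_zero]
  exact legSum_legLabel_zero_ne hk i

theorem colorCount_labeling_legLabel_le {m k : ℕ} :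
    colorCount (spider 3 (legLengths m k)) (Spider.labeling (legLabel m k)) ≤ 4 := by
  have hsub : Set.range (vertexSum (spider 3 (legLengths m k)) (Spider.labeling (legLabel m k))) ⊆
      Set.Icc (4 + 4 * m + k) (7 + 4 * m + k) := by
    rintro _ ⟨_ | s, rfl⟩
    · rw [Spider.vertexSum_labeling_none legLengths_pos, sum_legLabel_zero]
      exact ⟨by omega, by omega⟩
    · rw [Spider.vertexSum_labeling_some]
      exact legSum_legLabel_mem_Icc s.2.isLt
  calc colorCount _ _ ≤ (Set.Icc (4 + 4 * m + k) (7 + 4 * m + k)).ncard :=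
        Set.ncard_le_ncard hsub (Set.finite_Icc _ _)
    _ = 4 := by rw [Set.ncard_Icc_nat]; omega

theorem stmt14 (m k : ℕ) (hk : 2 ≤ k) :
    chiLA (spider 3 ![2, 2 + 2 * m, 2 + 2 * m + k]) = 4 :=
  chiLA_eq_of_forall_le_colorCount
    (fun _ hf => Spider.succ_le_colorCount (by norm_num) two_le_legLengths hf)
    (isLocalAntimagic_labeling_legLabel hk) colorCount_labeling_legLabel_le
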